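/- Let A = {a_1 < a_2 < ...} ⊆ ℕ. If liminf n(a_{n+1}-a_n)/a_{n+1} = limsup n(a_{n+1}-a_n)/a_n = c ∈ (0,∞], then (log n)/(log a_n) converges to 1/c (with 1/∞ = 0). -/

import Mathlib

open Filter Topology

/-! Write `L n = log a(n+1) - log a n`. The bounds `(y - x) / y ≤ log y - log x ≤ (y - x) / x`
squeeze `n * L n` between the two sequences whose liminf and limsup are `c`, so `n * L n → c`.
As `n * (log (n + 1) - log n) → 1`, the increments of `log aₙ` and of `log n` have ratio tending
to `c`, and the Stolz–Cesàro theorem gives `log aₙ / log n → c`. -/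

lemma Real.sub_div_le_log_sub_log {x y : ℝ} (hx : 0 < x) (hy : 0 < y) :
    (y - x) / y ≤ Real.log y - Real.log x := by
  have h := Real.one_sub_inv_le_log_of_pos (div_pos hy hx)
  rwa [Real.log_div hy.ne' hx.ne', inv_div, one_sub_div hy.ne'] at h

lemma Real.log_sub_log_le_sub_div {x y : ℝ} (hx : 0 < x) (hy : 0 < y) :
    Real.log y - Real.log x ≤ (y - x) / x := by
  have h := Real.log_le_sub_one_of_pos (div_pos hy hx)
  rwa [Real.log_div hy.ne' hx.ne', div_sub_one hx.ne'] at h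

lemma tendsto_natCast_mul_log_succ_sub_log :
    Tendsto (fun k : ℕ => (k : ℝ) * (Real.log (k + 1) - Real.log k)) atTop (𝓝 1) := by
  refine ((Real.tendsto_mul_log_one_add_div_atTop 1).comp tendsto_natCast_atTop_atTop).congr' ?_
  filter_upwards [eventually_ge_atTop 1] with k hk
  have hk : (0 : ℝ) < k := by exact_mod_cast hk
  rw [Function.comp_apply, ← Real.log_div (by positivity) hk.ne', add_div, div_self hk.ne',
    add_comm]

lemma eventually_lt_div_of_eventually_mul_sub_le {x b : ℕ → ℝ} (hb : Tendsto b atTop atTop)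
    {m m' : ℝ} (hm : m' < m) (h : ∀ᶠ k in atTop, m * (b (k + 1) - b k) ≤ x (k + 1) - x k) :
    ∀ᶠ n in atTop, m' < x n / b n := by
  obtain ⟨N, hN⟩ := eventually_atTop.1 h
  have hsum : ∀ n ≥ N, m * (b n - b N) ≤ x n - x N := by
    intro n hn
    induction n, hn using Nat.le_induction with
    | base => simp
    | succ n hn ih => linarith [hN n hn]
  have hlim : Tendsto (fun n => m + (x N - m * b N) / b n) atTop (𝓝 m) := by
    simpa using tendsto_const_nhds.add (tendsto_const_nhds.div_atTop hb)
  filter_upwards [hlim.eventually (eventually_gt_nhds hm), hb.eventually_gt_atTop 0,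
    eventually_ge_atTop N] with n hlt hbn hn
  calc m' < m + (x N - m * b N) / b n := hlt
    _ = (m * b n + (x N - m * b N)) / b n := by field_simp
    _ ≤ x n / b n := by gcongr; linarith [hsum n hn]

lemma eventually_div_lt_of_eventually_sub_le_mul {x b : ℕ → ℝ} (hb : Tendsto b atTop atTop)
    {m m' : ℝ} (hm : m < m') (h : ∀ᶠ k in atTop, x (k + 1) - x k ≤ m * (b (k + 1) - b k)) :
    ∀ᶠ n in atTop, x n / b n < m' := by
  have hneg := eventually_lt_div_of_eventually_mul_sub_le (x := -x) hb (neg_lt_neg hm)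
    (h.mono fun k hk => by simp only [Pi.neg_apply]; linarith)
  exact hneg.mono fun n hn => by rw [Pi.neg_apply, neg_div] at hn; linarith

/-- The Stolz–Cesàro theorem, for limits in `[0, ∞]`. -/
theorem ENNReal.tendsto_ofReal_div_of_tendsto_ofReal_sub_div_sub {x b : ℕ → ℝ}
    (hb : Tendsto b atTop atTop) (hb_lt : ∀ᶠ k in atTop, b k < b (k + 1)) {c : ENNReal}
    (h : Tendsto (fun k => ENNReal.ofReal ((x (k + 1) - x k) / (b (k + 1) - b k))) atTop (𝓝 c)) :
    Tendsto (fun n => ENNReal.ofReal (x n / b n)) atTop (𝓝 c) := by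
  refine tendsto_order.2 ⟨fun β hβc => ?_, fun β hcβ => ?_⟩
  · obtain ⟨m, -, hβm, hmc⟩ := ENNReal.lt_iff_exists_real_btwn.1 hβc
    have hβ_top : β ≠ ⊤ := ne_top_of_lt hβc
    refine (eventually_lt_div_of_eventually_mul_sub_le hb
      ((ENNReal.lt_ofReal_iff_toReal_lt hβ_top).1 hβm) ?_).mono
      fun n hn => (ENNReal.lt_ofReal_iff_toReal_lt hβ_top).2 hn
    filter_upwards [h.eventually (lt_mem_nhds hmc), hb_lt] with k hk hbk
    rw [← le_div_iff₀ (sub_pos.2 hbk)]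
    exact (ENNReal.ofReal_lt_ofReal_iff'.1 hk).1.le
  · rcases eq_or_ne β ⊤ with rfl | hβ_top
    · exact Eventually.of_forall fun _ => ENNReal.ofReal_lt_top
    obtain ⟨m, -, hcm, hmβ⟩ := ENNReal.lt_iff_exists_real_btwn.1 hcβ
    have hm_pos : 0 < m := ENNReal.ofReal_pos.1 (hcm.trans_le' bot_le)
    rw [← ENNReal.ofReal_toReal hβ_top] at hmβ ⊢
    have hmβ' := (ENNReal.ofReal_lt_ofReal_iff'.1 hmβ).1
    refine (eventually_div_lt_of_eventually_sub_le_mul hb hmβ' ?_).mono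
      fun n hn => (ENNReal.ofReal_lt_ofReal_iff (hm_pos.trans hmβ')).2 hn
    filter_upwards [h.eventually (gt_mem_nhds hcm), hb_lt] with k hk hbk
    rw [← div_le_iff₀ (sub_pos.2 hbk)]
    exact ((ENNReal.ofReal_lt_ofReal_iff hm_pos).1 hk).le

theorem tendsto_ofReal_div_log_of_tendsto_ofReal_mul_sub {x : ℕ → ℝ} {c : ENNReal}
    (h : Tendsto (fun k : ℕ => ENNReal.ofReal (k * (x (k + 1) - x k))) atTop (𝓝 c)) :
    Tendsto (fun n : ℕ => ENNReal.ofReal (x n / Real.log n)) atTop (𝓝 c) := by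
  have hlog : Tendsto (fun n : ℕ => Real.log n) atTop atTop :=
    Real.tendsto_log_atTop.comp tendsto_natCast_atTop_atTop
  have hlog_lt : ∀ᶠ k : ℕ in atTop, Real.log k < Real.log ↑(k + 1) :=
    (eventually_ge_atTop 1).mono fun k hk =>
      Real.log_lt_log (by exact_mod_cast hk) (by exact_mod_cast k.lt_succ_self)
  refine ENNReal.tendsto_ofReal_div_of_tendsto_ofReal_sub_div_sub hlog hlog_lt ?_
  have hw : Tendsto (fun k : ℕ => ENNReal.ofReal (k * (Real.log (k + 1) - Real.log k)))
      atTop (𝓝 1) := by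
    simpa only [Function.comp_def, ENNReal.ofReal_one] using
      (ENNReal.continuous_ofReal.tendsto 1).comp tendsto_natCast_mul_log_succ_sub_log
  have hdiv := ENNReal.Tendsto.div h (Or.inr one_ne_zero) hw (Or.inl ENNReal.one_ne_top)
  rw [div_one] at hdiv
  refine hdiv.congr' ?_
  filter_upwards [eventually_ge_atTop 1, hlog_lt] with k hk hk_lt
  have hk0 : (0 : ℝ) < k := by exact_mod_cast hk
  push_cast at hk_lt ⊢
  rw [← ENNReal.ofReal_div_of_pos (mul_pos hk0 (sub_pos.2 hk_lt)), mul_div_mul_left _ _ hk0.ne']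

theorem tendsto_ofReal_mul_log_sub_log_of_liminf_eq_of_limsup_eq {a : ℕ → ℝ}
    (ha : ∀ᶠ n in atTop, 0 < a n) {c : ENNReal}
    (hα : liminf (fun n : ℕ => ENNReal.ofReal (n * ((a (n + 1) - a n) / a (n + 1)))) atTop = c)
    (hβ : limsup (fun n : ℕ => ENNReal.ofReal (n * ((a (n + 1) - a n) / a n))) atTop = c) :
    Tendsto (fun n : ℕ => ENNReal.ofReal (n * (Real.log (a (n + 1)) - Real.log (a n))))
      atTop (𝓝 c) := by
  have ha' : ∀ᶠ n in atTop, 0 < a n ∧ 0 < a (n + 1) := ha.and (tendsto_add_atTop_nat 1 ha)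
  refine tendsto_of_le_liminf_of_limsup_le
    (hα ▸ liminf_le_liminf ?_) (hβ ▸ limsup_le_limsup ?_)
  · filter_upwards [ha'] with n ⟨hn, hn'⟩
    gcongr
    exact Real.sub_div_le_log_sub_log hn hn'
  · filter_upwards [ha'] with n ⟨hn, hn'⟩
    gcongr
    exact Real.log_sub_log_le_sub_div hn hn'

theorem exponential_density_of_eq_general (a : ℕ → ℕ) (hmono : StrictMono a) (c : ENNReal)
    (hα : liminf (fun n : ℕ =>
        ENNReal.ofReal ((n : ℝ) * (((a (n + 1) : ℝ) - a n) / (a (n + 1) : ℝ)))) atTop = c)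
    (hβ : limsup (fun n : ℕ =>
        ENNReal.ofReal ((n : ℝ) * (((a (n + 1) : ℝ) - a n) / (a n : ℝ)))) atTop = c) :
    Tendsto (fun n : ℕ => ENNReal.ofReal (Real.log n / Real.log (a n))) atTop (nhds c⁻¹) := by
  have ha_ge : ∀ n : ℕ, (n : ℝ) ≤ a n := fun n => by exact_mod_cast hmono.id_le n
  have ha_pos : ∀ᶠ n : ℕ in atTop, (0 : ℝ) < a n :=
    (eventually_gt_atTop 0).mono fun n hn => (ha_ge n).trans_lt' (by exact_mod_cast hn)
  have hlog_ratio := tendsto_ofReal_div_log_of_tendsto_ofReal_mul_sub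
    (x := fun n => Real.log (a n))
    (tendsto_ofReal_mul_log_sub_log_of_liminf_eq_of_limsup_eq (a := fun n => (a n : ℝ))
      ha_pos hα hβ)
  refine hlog_ratio.inv.congr' ?_
  filter_upwards [eventually_ge_atTop 2] with n hn
  have hn : (1 : ℝ) < n := by exact_mod_cast hn
  have hlog_n : 0 < Real.log n := Real.log_pos hn
  have hlog_an : 0 < Real.log (a n) := Real.log_pos (hn.trans_le (ha_ge n))
  rw [← ENNReal.ofReal_inv_of_pos (div_pos hlog_an hlog_n), inv_div]

/-- If `liminf n·gₙ/aₙ₊₁ = limsup n·gₙ/aₙ = c ∈ (0,∞]`, then `log n / log aₙ → 1/c`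
(with `1/∞ = 0`). -/
theorem exponential_density_of_eq (a : ℕ → ℕ) (hmono : StrictMono a)
    (hpos : ∀ n, 0 < a n) (c : ENNReal) (hc : 0 < c)
    (hα : liminf (fun n : ℕ =>
        ENNReal.ofReal ((n : ℝ) * (((a (n + 1) : ℝ) - a n) / (a (n + 1) : ℝ)))) atTop = c)
    (hβ : limsup (fun n : ℕ =>
        ENNReal.ofReal ((n : ℝ) * (((a (n + 1) : ℝ) - a n) / (a n : ℝ)))) atTop = c) :
    Tendsto (fun n : ℕ => ENNReal.ofReal (Real.log n / Real.log (a n))) atTop (nhds c⁻¹) :=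
  exponential_density_of_eq_general a hmono c hα hβ
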